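/- Let V = X ⊕ Y be an orthogonal decomposition of the real inner product space V, a ∈ C(V), and N a finite-dimensional subspace of V with a ∈ C(N). If X_N denotes the orthogonal projection of N onto X and M ∈ F(X) is any finite-dimensional subspace of X containing X_N, then E_M(a) = E_{X_N}(a). -/

import Mathlib

open CliffordAlgebra
open scoped RealInnerProductSpace

/-- The quadratic form `v ↦ ⟪v, v⟫` of a real inner product space. -/
noncomputable def QOfInner (V : Type*) [NormedAddCommGroup V] [InnerProductSpace ℝ V] :
    QuadraticForm ℝ V :=
  LinearMap.BilinMap.toQuadraticMap (innerₗ V : LinearMap.BilinForm ℝ V)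

/-- The linear map `P_u : C(V) → C(V)`, `a ↦ (a + u·γ(a)·u)/2`. -/
noncomputable def Pu {V : Type*} [NormedAddCommGroup V] [InnerProductSpace ℝ V] (u : V) :
    CliffordAlgebra (QOfInner V) →ₗ[ℝ] CliffordAlgebra (QOfInner V) :=
  (1 / 2 : ℝ) • (LinearMap.id
    + (LinearMap.mulLeft ℝ (ι (QOfInner V) u)) ∘ₗ (LinearMap.mulRight ℝ (ι (QOfInner V) u))
        ∘ₗ (involute (Q := QOfInner V)).toLinearMap)

/-- The composite `E_M = P_{u_m} ∘ ⋯ ∘ P_{u₁}` associated to an orthonormal basis of `M`. -/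
noncomputable def EM {V : Type*} [NormedAddCommGroup V] [InnerProductSpace ℝ V]
    {m : ℕ} (u : Fin m → V) :
    CliffordAlgebra (QOfInner V) →ₗ[ℝ] CliffordAlgebra (QOfInner V) :=
  (List.ofFn fun i => Pu (u i)).foldl (fun f g => g ∘ₗ f) LinearMap.id

section Aux
variable {V : Type*} [NormedAddCommGroup V] [InnerProductSpace ℝ V]

local notation "CV" => CliffordAlgebra (QOfInner V)
local notation "ιV" => ι (QOfInner V)

lemma QOfInner_apply (v : V) : QOfInner V v = ⟪v, v⟫ := rfl

lemma polar_QOfInner (x z : V) : QuadraticMap.polar (QOfInner V) x z = 2 * ⟪x, z⟫ := by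
  simp only [QuadraticMap.polar, QOfInner_apply]
  rw [real_inner_add_add_self]
  ring

lemma ι_swap (x z : V) :
    ιV x * ιV z + ιV z * ιV x = algebraMap ℝ CV (2 * ⟪x, z⟫) := by
  rw [← polar_QOfInner]; exact ι_mul_ι_add_swap x z

lemma ι_swap_zero {x z : V} (h : ⟪x, z⟫ = 0) : ιV x * ιV z + ιV z * ιV x = 0 := by
  rw [ι_swap, h]; simp

lemma ι_sq_one {v : V} (h : ⟪v, v⟫ = 1) : ιV v * ιV v = 1 := by
  rw [ι_sq_scalar, QOfInner_apply, h, map_one]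

lemma Pu_apply (v : V) (a : CV) :
    Pu v a = (1 / 2 : ℝ) • (a + ιV v * (involute a * ιV v)) := rfl

/-- `θ_x(c) = ι x * c + γ(c) * ι x`. -/
noncomputable def theta (x : V) : CV →ₗ[ℝ] CV :=
  LinearMap.mulLeft ℝ (ιV x)
    + (LinearMap.mulRight ℝ (ιV x)) ∘ₗ (involute (Q := QOfInner V)).toLinearMap

lemma theta_apply (x : V) (c : CV) : theta x c = ιV x * c + involute c * ιV x := rfl

lemma involute_theta (x : V) (c : CV) :
    involute (theta x c) = -(theta x (involute c)) := by
  simp only [theta_apply, map_add, map_mul, involute_ι, involute_involute]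
  noncomm_ring

lemma theta_add_vec (x y : V) (c : CV) : theta (x + y) c = theta x c + theta y c := by
  simp only [theta_apply, map_add]
  noncomm_ring

lemma theta_smul_vec (r : ℝ) (x : V) (c : CV) : theta (r • x) c = r • theta x c := by
  simp only [theta_apply, map_smul, smul_mul_assoc, mul_smul_comm, smul_add]

lemma theta_zero_vec (c : CV) : theta (0 : V) c = 0 := by
  simp [theta_apply]

lemma conj_theta {v x : V} (h0 : ιV v * ιV x + ιV x * ιV v = 0) (c : CV) :
    ιV v * (involute (theta x c) * ιV v) = theta x (ιV v * (involute c * ιV v)) := by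
  rw [involute_theta]
  simp only [theta_apply, map_mul, involute_ι, involute_involute, neg_mul, mul_neg, neg_add_rev,
    neg_neg]
  linear_combination (norm := noncomm_ring)
    (-(h0 * (involute c * ιV v)) - (ιV v * c) * h0)

lemma Pu_theta_comm {v x : V} (h : ⟪v, x⟫ = 0) (c : CV) :
    Pu v (theta x c) = theta x (Pu v c) := by
  have h0 : ιV v * ιV x + ιV x * ιV v = 0 := ι_swap_zero h
  rw [Pu_apply, Pu_apply, conj_theta h0, ← map_add, ← map_smul]

lemma Pu_theta_self {v : V} (h : ⟪v, v⟫ = 1) (c : CV) : Pu v (theta v c) = 0 := by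
  have hA := ι_sq_one h
  rw [Pu_apply]
  have key : ιV v * (involute (theta v c) * ιV v) = -(theta v c) := by
    rw [involute_theta]
    simp only [theta_apply, map_mul, involute_ι, involute_involute, neg_mul, mul_neg, neg_add_rev,
      neg_neg]
    linear_combination (norm := noncomm_ring)
      (-(hA * (involute c * ιV v)) - (ιV v * c) * hA)
  rw [key]
  simp

lemma Pu_fix {v : V} {b : CV} (h : ⟪v, v⟫ = 1)
    (hc : ιV v * b = involute b * ιV v) : Pu v b = b := by
  have hA := ι_sq_one h
  have hc' : ιV v * involute b = b * ιV v := by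
    have h2 := congrArg (involute (Q := QOfInner V)) hc
    simp only [map_mul, involute_ι, involute_involute, neg_mul, mul_neg, neg_inj] at h2
    exact h2
  rw [Pu_apply]
  have key : ιV v * (involute b * ιV v) = b := by
    linear_combination (norm := noncomm_ring) (hc' * ιV v + b * hA)
  rw [key]
  module

lemma theta_mul_ι (x z : V) (c : CV) :
    theta x c * ιV z = theta x (c * ιV z) + (2 * ⟪x, z⟫) • involute c := by
  rw [Algebra.smul_def]
  obtain ⟨r, hr⟩ : ∃ r, r = 2 * ⟪x, z⟫ := ⟨_, rfl⟩
  rw [← hr]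
  have hswap : ιV x * ιV z + ιV z * ιV x = algebraMap ℝ CV r := by rw [hr]; exact ι_swap x z
  have hcomm := Algebra.commutes r (involute c (Q := QOfInner V))
  simp only [theta_apply, map_mul, involute_ι, mul_neg, neg_mul]
  linear_combination (norm := noncomm_ring) (involute c * hswap - hcomm)

lemma ι_mul_theta_of_orth {x z : V} (h : ⟪x, z⟫ = 0) (c : CV) :
    ιV z * theta x c = theta x (-(ιV z * c)) := by
  have h0 : ιV z * ιV x + ιV x * ιV z = 0 := by
    have := ι_swap_zero h
    linear_combination (norm := noncomm_ring) this
  simp only [theta_apply, map_neg, map_mul, involute_ι, neg_mul, mul_neg, neg_neg]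
  linear_combination (norm := noncomm_ring) (h0 * c)

lemma ι_mul_eq_theta_sub (z : V) (d : CV) :
    ιV z * d = theta z d - involute d * ιV z := by
  rw [theta_apply]; noncomm_ring


/-- Apply `Pu` along a list. -/
noncomputable def EL (l : List V) : CV →ₗ[ℝ] CV :=
  (l.map Pu).foldl (fun f g => g ∘ₗ f) LinearMap.id

lemma foldl_comp (l : List (CV →ₗ[ℝ] CV)) (f : CV →ₗ[ℝ] CV) :
    l.foldl (fun f g => g ∘ₗ f) f = (l.foldl (fun f g => g ∘ₗ f) LinearMap.id) ∘ₗ f := by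
  induction l generalizing f with
  | nil => simp
  | cons g l ih =>
    simp only [List.foldl_cons]
    rw [ih, ih (g ∘ₗ LinearMap.id)]
    simp [LinearMap.comp_assoc]

lemma EL_cons (v : V) (l : List V) : EL (v :: l) = EL l ∘ₗ Pu v := by
  simp only [EL, List.map_cons, List.foldl_cons]
  rw [foldl_comp]
  simp

lemma EM_eq_EL {m : ℕ} (u : Fin m → V) : EM u = EL (List.ofFn u) := by
  unfold EM EL
  rw [List.map_ofFn]
  rfl

lemma EL_fix {l : List V} {b : CV} (h : ∀ v ∈ l, Pu v b = b) : EL l b = b := by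
  induction l with
  | nil => simp [EL]
  | cons v l ih =>
    rw [EL_cons]
    simp only [LinearMap.comp_apply]
    rw [h v (List.mem_cons_self)]
    exact ih fun v hv => h v (List.mem_cons_of_mem _ hv)

lemma EL_theta_zero {l : List V} {x : V} (hone : ⟪x, x⟫ = 1)
    (hl : ∀ v ∈ l, v = x ∨ ⟪v, x⟫ = 0) (hmem : x ∈ l) (c : CV) :
    EL l (theta x c) = 0 := by
  induction l generalizing c with
  | nil => exact absurd hmem List.not_mem_nil
  | cons v l ih =>
    rw [EL_cons]
    simp only [LinearMap.comp_apply]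
    rcases hl v (List.mem_cons_self) with hv | hv
    · subst hv
      rw [Pu_theta_self hone, map_zero]
    · have hx : x ∈ l := by
        rcases List.mem_cons.mp hmem with h | h
        · exfalso; rw [h] at hone hv; rw [hv] at hone; norm_num at hone
        · exact h
      rw [Pu_theta_comm hv]
      exact ih (fun v hv => hl v (List.mem_cons_of_mem _ hv)) hx _

lemma EM_theta_zero {m : ℕ} {u : Fin m → V} (hu : Orthonormal ℝ u) {x : V}
    (hx : x ∈ Submodule.span ℝ (Set.range u)) (c : CV) : EM u (theta x c) = 0 := by
  rw [EM_eq_EL]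
  induction hx using Submodule.span_induction generalizing c with
  | mem y hy =>
    obtain ⟨i, rfl⟩ := hy
    refine EL_theta_zero ?_ ?_ ?_ c
    · have h1 := hu.1 i
      rw [real_inner_self_eq_norm_sq, h1]
      norm_num
    · intro v hv
      obtain ⟨j, rfl⟩ := List.mem_ofFn.mp hv
      by_cases hji : j = i
      · left; rw [hji]
      · right; exact hu.2 hji
    · exact List.mem_ofFn.mpr ⟨i, rfl⟩
  | zero => rw [theta_zero_vec, map_zero]
  | add y z _ _ ihy ihz => rw [theta_add_vec, map_add, ihy, ihz, add_zero]
  | smul r y _ ihy => rw [theta_smul_vec, map_smul, ihy, smul_zero]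

lemma supercommute {Z : Set V} {v : V} (hv : ∀ z ∈ Z, ⟪v, z⟫ = 0) {b : CV}
    (hb : b ∈ Algebra.adjoin ℝ (ιV '' Z)) : ιV v * b = involute b * ιV v := by
  induction hb using Algebra.adjoin_induction with
  | mem y hy =>
    obtain ⟨z, hz, rfl⟩ := hy
    rw [involute_ι]
    have := ι_swap_zero (hv z hz)
    linear_combination (norm := noncomm_ring) this
  | algebraMap r =>
    rw [AlgHom.commutes]
    exact (Algebra.commutes r (ιV v)).symm
  | add y z _ _ ihy ihz =>
    rw [mul_add, ihy, ihz, map_add, add_mul]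
  | mul y z _ _ ihy ihz =>
    rw [map_mul, ← mul_assoc, ihy, mul_assoc, ihz, mul_assoc]

lemma involute_adjoin {Z : Set V} {b : CV}
    (hb : b ∈ Algebra.adjoin ℝ (ιV '' Z)) :
    involute b ∈ Algebra.adjoin ℝ (ιV '' Z) := by
  induction hb using Algebra.adjoin_induction with
  | mem y hy =>
    obtain ⟨z, hz, rfl⟩ := hy
    rw [involute_ι]
    exact neg_mem (Algebra.subset_adjoin ⟨z, hz, rfl⟩)
  | algebraMap r => rw [AlgHom.commutes]; exact algebraMap_mem _ r
  | add y z _ _ ihy ihz => rw [map_add]; exact add_mem ihy ihz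
  | mul y z _ _ ihy ihz => rw [map_mul]; exact mul_mem ihy ihz

end Aux

/-- let `V = X ⊕ Y` be an orthogonal decomposition, `a ∈ C(N)` for a
finite-dimensional subspace `N`, `X_N` the orthogonal projection of `N` onto `X`
(spanned by the orthonormal tuple `w`), and `M` a finite-dimensional subspace of `X`
containing `X_N` (spanned by the orthonormal tuple `u`).  Then `E_M(a) = E_{X_N}(a)`. -/
theorem EM_stabilizes
    {V : Type*} [NormedAddCommGroup V] [InnerProductSpace ℝ V]
    (X Y : Submodule ℝ V) (hXY : IsCompl X Y)
    (horth : ∀ x ∈ X, ∀ y ∈ Y, ⟪x, y⟫ = 0)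
    (N : Submodule ℝ V) [FiniteDimensional ℝ N]
    (a : CliffordAlgebra (QOfInner V))
    (ha : a ∈ Algebra.adjoin ℝ (ι (QOfInner V) '' (N : Set V)))
    {n : ℕ} (w : Fin n → V) (hw : Orthonormal ℝ w)
    (hwspan : Submodule.span ℝ (Set.range w)
      = Submodule.map (X.subtype ∘ₗ Submodule.linearProjOfIsCompl X Y hXY) N)
    {m : ℕ} (u : Fin m → V) (hu : Orthonormal ℝ u)
    (hXNM : Submodule.span ℝ (Set.range w) ≤ Submodule.span ℝ (Set.range u))
    (hMX : Submodule.span ℝ (Set.range u) ≤ X) :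
    EM u a = EM w a := by
  classical
  set proj : V →ₗ[ℝ] V := X.subtype ∘ₗ Submodule.linearProjOfIsCompl X Y hXY with hproj
  set proj2 : V →ₗ[ℝ] V := LinearMap.id - proj with hproj2
  set Xn : Submodule ℝ V := Submodule.map proj N with hXndef
  set Yn : Submodule ℝ V := Submodule.map proj2 N with hYndef
  have hXnX : Xn ≤ X := by
    rintro _ ⟨z, hz, rfl⟩
    exact SetLike.coe_mem _
  have hproj2app : ∀ z : V, proj2 z = z - proj z := by
    intro z
    rw [hproj2]
    simp [LinearMap.sub_apply]
  have hYnY : Yn ≤ Y := by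
    rintro _ ⟨z, hz, rfl⟩
    have hker : Submodule.linearProjOfIsCompl X Y hXY (proj2 z) = 0 := by
      rw [hproj2app, map_sub, hproj]
      simp only [LinearMap.comp_apply, Submodule.coe_subtype, Submodule.linearProjOfIsCompl,
        Submodule.projectionOnto_apply_left, sub_self]
    have hY := Submodule.linearProjOfIsCompl_ker hXY
    rw [← hY]
    exact LinearMap.mem_ker.mpr hker
  have hXnW : Xn ≤ Submodule.span ℝ (Set.range w) := le_of_eq hwspan.symm
  have hXnU : Xn ≤ Submodule.span ℝ (Set.range u) := le_trans hXnW hXNM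
  have huX : ∀ i, u i ∈ X := fun i => hMX (Submodule.subset_span ⟨i, rfl⟩)
  have hwXmem : ∀ j, w j ∈ X := fun j => hMX (hXNM (Submodule.subset_span ⟨j, rfl⟩))
  have hu1 : ∀ i, ⟪u i, u i⟫ = 1 := by
    intro i
    rw [real_inner_self_eq_norm_sq, hu.1 i]
    norm_num
  have hw1 : ∀ j, ⟪w j, w j⟫ = 1 := by
    intro j
    rw [real_inner_self_eq_norm_sq, hw.1 j]
    norm_num
  -- the subalgebra generated by the Y-components
  set CY : Subalgebra ℝ (CliffordAlgebra (QOfInner V)) :=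
    Algebra.adjoin ℝ (ι (QOfInner V) '' (Yn : Set V)) with hCYdef
  set CYm : Submodule ℝ (CliffordAlgebra (QOfInner V)) := Subalgebra.toSubmodule CY with hCYm
  have hmemCY : ∀ b : CliffordAlgebra (QOfInner V), b ∈ CYm ↔ b ∈ CY := fun b =>
    Subalgebra.mem_toSubmodule CY
  -- Pu fixes C(Yn) for unit vectors in X
  have hfixCY : ∀ v ∈ X, ⟪v, v⟫ = 1 → ∀ b ∈ CYm, Pu v b = b := by
    intro v hvX hv1 b hb
    refine Pu_fix hv1 (supercommute ?_ ((hmemCY b).mp hb))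
    intro z hz
    exact horth v hvX z (hYnY hz)
  -- the "kernel" submodule
  set D : Submodule ℝ (CliffordAlgebra (QOfInner V)) := LinearMap.ker (EM u - EM w) with hDdef
  have hmemD : ∀ t, t ∈ D ↔ EM u t = EM w t := by
    intro t
    rw [hDdef, LinearMap.mem_ker, LinearMap.sub_apply, sub_eq_zero]
  have hCYD : CYm ≤ D := by
    intro b hb
    rw [hmemD]
    have h1 : EM u b = b := by
      rw [EM_eq_EL]
      refine EL_fix ?_
      intro v hv
      obtain ⟨i, rfl⟩ := List.mem_ofFn.mp hv
      exact hfixCY _ (huX i) (hu1 i) b hb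
    have h2 : EM w b = b := by
      rw [EM_eq_EL]
      refine EL_fix ?_
      intro v hv
      obtain ⟨j, rfl⟩ := List.mem_ofFn.mp hv
      exact hfixCY _ (hwXmem j) (hw1 j) b hb
    rw [h1, h2]
  have hThetaD : ∀ x ∈ Xn, ∀ c, theta x c ∈ D := by
    intro x hx c
    rw [hmemD]
    rw [EM_theta_zero hu (hXnU hx) c, EM_theta_zero hw (hXnW hx) c]
  -- the filtration
  set T : ℕ → Submodule ℝ (CliffordAlgebra (QOfInner V)) := fun k =>
    Nat.rec CYm (fun _ Tk => (Tk ⊔ CYm) ⊔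
      Submodule.span ℝ {t | ∃ x ∈ Xn, ∃ c ∈ Tk, t = theta x c}) k with hTdef
  have hT0 : T 0 = CYm := rfl
  have hTsucc : ∀ k, T (k + 1) = (T k ⊔ CYm) ⊔
      Submodule.span ℝ {t | ∃ x ∈ Xn, ∃ c ∈ T k, t = theta x c} := fun k => rfl
  have hTmono : ∀ k, T k ≤ T (k + 1) := by
    intro k
    rw [hTsucc]
    exact le_trans le_sup_left le_sup_left
  have hCYT : ∀ k, CYm ≤ T k := by
    intro k
    cases k with
    | zero => exact le_of_eq hT0.symm
    | succ k => rw [hTsucc]; exact le_trans le_sup_right le_sup_left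
  have hgenT : ∀ k, ∀ x ∈ Xn, ∀ c ∈ T k, theta x c ∈ T (k + 1) := by
    intro k x hx c hc
    rw [hTsucc]
    exact Submodule.mem_sup_right (Submodule.subset_span ⟨x, hx, c, hc, rfl⟩)
  have hTD : ∀ k, T k ≤ D := by
    intro k
    induction k with
    | zero => exact hCYD
    | succ k ih =>
      rw [hTsucc]
      refine sup_le (sup_le ih hCYD) ?_
      refine Submodule.span_le.mpr ?_
      rintro _ ⟨x, hx, c, hc, rfl⟩
      exact hThetaD x hx c
  -- T is stable under involute
  have hTinv : ∀ k, ∀ b ∈ T k, involute b ∈ T k := by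
    intro k
    induction k with
    | zero =>
      intro b hb
      rw [hT0] at *
      exact (hmemCY _).mpr (involute_adjoin ((hmemCY b).mp hb))
    | succ k ih =>
      have key : T (k + 1) ≤
          Submodule.comap (involute (Q := QOfInner V)).toLinearMap (T (k + 1)) := by
        refine le_trans (le_of_eq (hTsucc k)) (sup_le (sup_le ?_ ?_) ?_)
        · intro b hb
          simp only [Submodule.mem_comap, AlgHom.toLinearMap_apply]
          exact (hTmono k) (ih b hb)
        · intro b hb
          simp only [Submodule.mem_comap, AlgHom.toLinearMap_apply]
          exact (hCYT (k + 1)) ((hmemCY _).mpr (involute_adjoin ((hmemCY b).mp hb)))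
        · refine Submodule.span_le.mpr ?_
          rintro _ ⟨x, hx, c, hc, rfl⟩
          simp only [Set.mem_setOf_eq, SetLike.mem_coe, Submodule.mem_comap,
            AlgHom.toLinearMap_apply]
          rw [involute_theta]
          exact neg_mem (hgenT k x hx _ (ih c hc))
      intro b hb
      exact key hb
  -- multiplication of C(Yn) by generators
  have hCYmul : ∀ k, ∀ z ∈ (Xn : Set V) ∪ (Yn : Set V), ∀ b ∈ CYm,
      b * ι (QOfInner V) z ∈ T (k + 1) ∧ ι (QOfInner V) z * b ∈ T (k + 1) := by
    intro k z hz b hb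
    rcases hz with hz | hz
    · -- z ∈ Xn
      have hzX : z ∈ X := hXnX hz
      have hSC : ι (QOfInner V) z * b = involute b * ι (QOfInner V) z :=
        supercommute (fun y hy => horth z hzX y (hYnY hy)) ((hmemCY b).mp hb)
      have hSC' : ι (QOfInner V) z * involute b = b * ι (QOfInner V) z := by
        have h3 := supercommute (fun y hy => horth z hzX y (hYnY hy))
          (involute_adjoin ((hmemCY b).mp hb))
        rwa [involute_involute] at h3
      constructor
      · have hb' : b * ι (QOfInner V) z = (1 / 2 : ℝ) • theta z (involute b) := by
          rw [theta_apply, involute_involute, hSC']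
          module
        rw [hb']
        refine Submodule.smul_mem _ _ (hgenT k z hz _ ?_)
        exact (hCYT k) ((hmemCY _).mpr (involute_adjoin ((hmemCY b).mp hb)))
      · have hb' : ι (QOfInner V) z * b = (1 / 2 : ℝ) • theta z b := by
          rw [theta_apply, ← hSC]
          module
        rw [hb']
        exact Submodule.smul_mem _ _ (hgenT k z hz _ ((hCYT k) hb))
    · -- z ∈ Yn
      have hzCY : ι (QOfInner V) z ∈ CY := Algebra.subset_adjoin ⟨z, hz, rfl⟩
      constructor
      · exact (hCYT (k + 1)) ((hmemCY _).mpr (mul_mem ((hmemCY b).mp hb) hzCY))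
      · exact (hCYT (k + 1)) ((hmemCY _).mpr (mul_mem hzCY ((hmemCY b).mp hb)))
  -- multiplication by generators raises the filtration by one step
  have hmul : ∀ k, ∀ z ∈ (Xn : Set V) ∪ (Yn : Set V), ∀ b ∈ T k,
      b * ι (QOfInner V) z ∈ T (k + 1) ∧ ι (QOfInner V) z * b ∈ T (k + 1) := by
    intro k
    induction k with
    | zero =>
      intro z hz b hb
      exact hCYmul 0 z hz b hb
    | succ k ih =>
      intro z hz b hb
      have key : T (k + 1) ≤
          Submodule.comap (LinearMap.mulRight ℝ (ι (QOfInner V) z)) (T (k + 1 + 1)) ⊓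
          Submodule.comap (LinearMap.mulLeft ℝ (ι (QOfInner V) z)) (T (k + 1 + 1)) := by
        refine le_trans (le_of_eq (hTsucc k)) (sup_le (sup_le ?_ ?_) ?_)
        · intro c hc
          simp only [Submodule.mem_inf, Submodule.mem_comap, LinearMap.mulRight_apply,
            LinearMap.mulLeft_apply]
          obtain ⟨h1, h2⟩ := ih z hz c hc
          exact ⟨(hTmono (k + 1)) h1, (hTmono (k + 1)) h2⟩
        · intro c hc
          simp only [Submodule.mem_inf, Submodule.mem_comap, LinearMap.mulRight_apply,
            LinearMap.mulLeft_apply]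
          exact hCYmul (k + 1) z hz c hc
        · refine Submodule.span_le.mpr ?_
          rintro _ ⟨x, hx, c, hc, rfl⟩
          simp only [Set.mem_setOf_eq, SetLike.mem_coe, Submodule.mem_inf, Submodule.mem_comap,
            LinearMap.mulRight_apply, LinearMap.mulLeft_apply]
          have hRight : theta x c * ι (QOfInner V) z ∈ T (k + 1 + 1) := by
            rw [theta_mul_ι]
            refine add_mem ?_ (Submodule.smul_mem _ _ ?_)
            · exact hgenT (k + 1) x hx _ (ih z hz c hc).1
            · exact (hTmono (k + 1)) ((hTmono k) (hTinv k c hc))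
          refine ⟨hRight, ?_⟩
          rcases hz with hz' | hz'
          · -- z ∈ Xn : use θ_z
            rw [ι_mul_eq_theta_sub]
            refine sub_mem ?_ ?_
            · exact hgenT (k + 1) z hz' _ (hgenT k x hx c hc)
            · rw [involute_theta, neg_mul]
              refine neg_mem ?_
              rw [theta_mul_ι]
              refine add_mem ?_ (Submodule.smul_mem _ _ ?_)
              · exact hgenT (k + 1) x hx _ (ih z (Or.inl hz') (involute c) (hTinv k c hc)).1
              · rw [involute_involute]
                exact (hTmono (k + 1)) ((hTmono k) hc)
          · -- z ∈ Yn : orthogonal case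
            have hxz : ⟪x, z⟫ = 0 := horth x (hXnX hx) z (hYnY hz')
            rw [ι_mul_theta_of_orth hxz]
            exact hgenT (k + 1) x hx _ (neg_mem (ih z (Or.inr hz') c hc).2)
      obtain ⟨h1, h2⟩ := Submodule.mem_inf.mp (key hb)
      rw [Submodule.mem_comap, LinearMap.mulRight_apply] at h1
      rw [Submodule.mem_comap, LinearMap.mulLeft_apply] at h2
      exact ⟨h1, h2⟩
  -- products of generators
  have hprod : ∀ l : List (CliffordAlgebra (QOfInner V)),
      (∀ p ∈ l, p ∈ ι (QOfInner V) '' ((Xn : Set V) ∪ (Yn : Set V))) →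
      l.prod ∈ T l.length := by
    intro l
    induction l with
    | nil =>
      intro _
      rw [List.prod_nil, List.length_nil, hT0]
      exact (hmemCY _).mpr (one_mem CY)
    | cons p l ih =>
      intro hl
      rw [List.prod_cons, List.length_cons]
      obtain ⟨z, hz, rfl⟩ := hl p (List.mem_cons_self)
      exact (hmul l.length z hz _ (ih fun q hq => hl q (List.mem_cons_of_mem _ hq))).2
  -- a lies in the adjoin of the split generators
  have hadj2 : a ∈ Algebra.adjoin ℝ (ι (QOfInner V) '' ((Xn : Set V) ∪ (Yn : Set V))) := by
    refine Algebra.adjoin_le ?_ ha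
    rintro _ ⟨z, hz, rfl⟩
    have hdecomp : ι (QOfInner V) z
        = ι (QOfInner V) (proj z) + ι (QOfInner V) (proj2 z) := by
      rw [← map_add]
      congr 1
      rw [hproj2app]
      abel
    rw [hdecomp]
    refine add_mem ?_ ?_
    · exact Algebra.subset_adjoin ⟨proj z, Or.inl ⟨z, hz, rfl⟩, rfl⟩
    · exact Algebra.subset_adjoin ⟨proj2 z, Or.inr ⟨z, hz, rfl⟩, rfl⟩
  -- conclude
  have haD : a ∈ D := by
    have h1 : Subalgebra.toSubmodule
        (Algebra.adjoin ℝ (ι (QOfInner V) '' ((Xn : Set V) ∪ (Yn : Set V)))) ≤ D := by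
      rw [Algebra.adjoin_eq_span]
      refine Submodule.span_le.mpr ?_
      intro p hp
      obtain ⟨l, hl, rfl⟩ := Submonoid.exists_list_of_mem_closure hp
      exact (hTD l.length) (hprod l hl)
    exact h1 hadj2
  exact (hmemD a).mp haD
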